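/- Let Ω be a witness and let τ be an unambiguous and causal trace. If the constraint graph G(Ω)(τ) has a cycle, then it has a k-nice cycle for some k with 1 ≤ k ≤ min{n,m}. -/

import Mathlib

/-- A memory operation: read or write. -/
inductive MemOp : Type
  | R : MemOp
  | W : MemOp
deriving DecidableEq

/-- A memory event ⟨op, proc, loc, data⟩. -/
structure MemEvent : Type where
  op : MemOp
  proc : ℕ
  loc : ℕ
  data : ℕ
deriving DecidableEq

instance : Inhabited MemEvent := ⟨⟨MemOp.R, 1, 1, 0⟩⟩

/-- A trace is a finite sequence of memory events (1-indexed via `ev`). -/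
abbrev MTrace := List MemEvent

/-- The x-th event of a trace (1-indexed). -/
def ev (τ : MTrace) (x : ℕ) : MemEvent := τ.getD (x - 1) default

/-- dom(τ) = {1, …, |τ|}. -/
def Dom (τ : MTrace) : Set ℕ := {x | 1 ≤ x ∧ x ≤ τ.length}

/-- P(τ,i): indices of events of processor i. -/
def Pset (τ : MTrace) (i : ℕ) : Set ℕ := {x | x ∈ Dom τ ∧ (ev τ x).proc = i}

/-- L(τ,j): indices of events to location j. -/
def Lset (τ : MTrace) (j : ℕ) : Set ℕ := {x | x ∈ Dom τ ∧ (ev τ x).loc = j}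

/-- L^w(τ,j): indices of write events to location j. -/
def Lw (τ : MTrace) (j : ℕ) : Set ℕ := {x | x ∈ Lset τ j ∧ (ev τ x).op = MemOp.W}

/-- L^r(τ,j): indices of read events to location j. -/
def Lr (τ : MTrace) (j : ℕ) : Set ℕ := {x | x ∈ Lset τ j ∧ (ev τ x).op = MemOp.R}

/-- A trace is unambiguous if every write event has a nonzero data value distinct
from that of every other write event to the same location. -/
def Unambiguous (τ : MTrace) : Prop :=
  ∀ j, ∀ x ∈ Lw τ j, (ev τ x).data ≠ 0 ∧
    ∀ y ∈ Lw τ j, y ≠ x → (ev τ y).data ≠ (ev τ x).data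

/-- A trace is causal if the data value of every read event is 0 or equals the data
value of some write event to the same location. -/
def Causal (τ : MTrace) : Prop :=
  ∀ j, ∀ x ∈ Lr τ j, (ev τ x).data = 0 ∨ ∃ y ∈ Lw τ j, (ev τ y).data = (ev τ x).data

/-- ⟨x,y⟩ ∈ M(τ,i): the total order on P(τ,i) given by index order. -/
def Mrel (τ : MTrace) (i : ℕ) (x y : ℕ) : Prop :=
  x ∈ Pset τ i ∧ y ∈ Pset τ i ∧ x < y

/-- A sequence of memory events (given by its length and 1-indexed access function)
is serial: each event's data value equals that of the latest write to the same
location at an index no larger than its own, and equals 0 if no such write exists. -/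
def SerialFn (len : ℕ) (e : ℕ → MemEvent) : Prop :=
  ∀ u, 1 ≤ u → u ≤ len →
    ((∀ k, 1 ≤ k → k ≤ u → ¬((e k).op = MemOp.W ∧ (e k).loc = (e u).loc)) →
       (e u).data = 0) ∧
    (∀ k, 1 ≤ k → k ≤ u → (e k).op = MemOp.W → (e k).loc = (e u).loc →
       (∀ k', k < k' → k' ≤ u → ¬((e k').op = MemOp.W ∧ (e k').loc = (e u).loc)) →
       (e u).data = (e k).data)

/-- f (with inverse g) is a permutation of {1,…,|τ|} satisfying conditions C1 and C2. -/
def IsSCWitness (τ : MTrace) (f g : ℕ → ℕ) : Prop :=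
  (∀ u ∈ Dom τ, f u ∈ Dom τ) ∧
  (∀ u ∈ Dom τ, g u ∈ Dom τ) ∧
  (∀ u ∈ Dom τ, g (f u) = u) ∧
  (∀ u ∈ Dom τ, f (g u) = u) ∧
  (∀ i u v, Mrel τ i u v → f u < f v) ∧
  SerialFn τ.length (fun x => ev τ (g x))

/-- A trace is sequentially consistent if some permutation satisfies C1 and C2. -/
def SeqConsistent (τ : MTrace) : Prop := ∃ f g, IsSCWitness τ f g

/-- A witness assigns to each trace and location a strict total order on L^w(τ,j). -/
def IsWitness (Ω : MTrace → ℕ → ℕ → ℕ → Prop) : Prop :=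
  ∀ τ j,
    (∀ x y, Ω τ j x y → x ∈ Lw τ j ∧ y ∈ Lw τ j) ∧
    (∀ x, ¬ Ω τ j x x) ∧
    (∀ x y z, Ω τ j x y → Ω τ j y z → Ω τ j x z) ∧
    (∀ x y, x ∈ Lw τ j → y ∈ Lw τ j → x ≠ y → Ω τ j x y ∨ Ω τ j y x)

/-- A witness is simple if it orders the writes to each location by index order. -/
def IsSimple (Ω : MTrace → ℕ → ℕ → ℕ → Prop) : Prop :=
  ∀ τ j x y, Ω τ j x y ↔ (x ∈ Lw τ j ∧ y ∈ Lw τ j ∧ x < y)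

/-- ⟨x,y⟩ ∈ Ω^e(τ,j): the extension of the witness order to all events to location j. -/
def OmegaE (Ω : MTrace → ℕ → ℕ → ℕ → Prop) (τ : MTrace) (j x y : ℕ) : Prop :=
  x ∈ Lset τ j ∧ y ∈ Lset τ j ∧
  (((ev τ x).data = (ev τ y).data ∧ (ev τ x).op = MemOp.W ∧ (ev τ y).op = MemOp.R) ∨
   ((ev τ x).data = 0 ∧ (ev τ y).data ≠ 0) ∨
   (∃ a b, a ∈ Lw τ j ∧ b ∈ Lw τ j ∧ Ω τ j a b ∧
      (ev τ a).data = (ev τ x).data ∧ (ev τ b).data = (ev τ y).data))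

/-- Edge of the constraint graph G(Ω)(τ): union of the M(τ,i) and the Ω^e(τ,j). -/
def GEdge (Ω : MTrace → ℕ → ℕ → ℕ → Prop) (τ : MTrace) (x y : ℕ) : Prop :=
  (∃ i, Mrel τ i x y) ∨ (∃ j, OmegaE Ω τ j x y)

/-- The constraint graph G(Ω)(τ) has a cycle. -/
def HasCycle (Ω : MTrace → ℕ → ℕ → ℕ → Prop) (τ : MTrace) : Prop :=
  ∃ x, Relation.TransGen (GEdge Ω τ) x x

/-- The constraint graph G(Ω)(τ) is acyclic. -/
def Acyclic (Ω : MTrace → ℕ → ℕ → ℕ → Prop) (τ : MTrace) : Prop :=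
  ¬ HasCycle Ω τ

/-- All events of the trace have processor in {1,…,n} and location in {1,…,m}. -/
def InRange (n m : ℕ) (τ : MTrace) : Prop :=
  ∀ e ∈ τ, 1 ≤ e.proc ∧ e.proc ≤ n ∧ 1 ≤ e.loc ∧ e.loc ≤ m

/-- All data values in the trace lie in {0,…,v}. -/
def DataBounded (v : ℕ) (τ : MTrace) : Prop := ∀ e ∈ τ, e.data ≤ v

/-- A memory system with n processors and m locations: for each v ≥ 1, a set S(n,m,v)
of traces whose processors, locations, and data values are in range. -/
structure MemSystem (n m : ℕ) : Type where
  S : ℕ → Set MTrace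
  wf : ∀ v, 1 ≤ v → ∀ τ ∈ S v, InRange n m τ ∧ DataBounded v τ

/-- S(n,m): the union of the S(n,m,v) over v ≥ 1. -/
def MemSystem.traces {n m : ℕ} (M : MemSystem n m) : Set MTrace :=
  {τ | ∃ v, 1 ≤ v ∧ τ ∈ M.S v}

/-- A renaming function λ with λ(j,0) = 0 for every location j. -/
def IsRenaming (lam : ℕ → ℕ → ℕ) : Prop := ∀ j, lam j 0 = 0

/-- λ^d: rename the data value of each event according to its location. -/
def renameD (lam : ℕ → ℕ → ℕ) (τ : MTrace) : MTrace :=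
  τ.map fun e => { e with data := lam e.loc e.data }

/-- The memory system is data independent: a trace is in S(n,m,v) iff it is obtained
from an unambiguous trace of S(n,m) by a renaming function with values in {0,…,v}. -/
def DataIndependent {n m : ℕ} (M : MemSystem n m) : Prop :=
  ∀ v, 1 ≤ v → ∀ τ, τ ∈ M.S v ↔
    ∃ τ' lam, τ' ∈ M.traces ∧ Unambiguous τ' ∧ IsRenaming lam ∧
      (∀ j d, lam j d ≤ v) ∧ τ = renameD lam τ'

/-- λ^p: rename the processor of each event. -/
def renameP (lam : ℕ → ℕ) (τ : MTrace) : MTrace :=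
  τ.map fun e => { e with proc := lam e.proc }

/-- λ^l: rename the location of each event. -/
def renameL (lam : ℕ → ℕ) (τ : MTrace) : MTrace :=
  τ.map fun e => { e with loc := lam e.loc }

/-- λ is a permutation of {1,…,n}. -/
def PermOn (n : ℕ) (lam : ℕ → ℕ) : Prop :=
  Set.BijOn lam (Set.Icc 1 n) (Set.Icc 1 n)

/-- The memory system is processor symmetric. -/
def ProcSymmetric {n m : ℕ} (M : MemSystem n m) : Prop :=
  ∀ lam, PermOn n lam → ∀ v τ, τ ∈ M.S v → renameP lam τ ∈ M.S v

/-- The memory system is location symmetric. -/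
def LocSymmetric {n m : ℕ} (M : MemSystem n m) : Prop :=
  ∀ lam, PermOn m lam → ∀ v τ, τ ∈ M.S v → renameL lam τ ∈ M.S v

/-- x ⊕ 1 in the cyclic group {1,…,k} with identity k. -/
def cyc (k x : ℕ) : ℕ := if x = k then 1 else x + 1

/-- A k-nice cycle u_1,v_1,…,u_k,v_k in G(Ω)(τ): distinct vertices; each ⟨u_x,v_x⟩
is a processor edge, each ⟨v_x,u_{x⊕1}⟩ a location edge; no processor (resp.
location) contributes two edges. -/
def NiceCycle (Ω : MTrace → ℕ → ℕ → ℕ → Prop) (τ : MTrace) (k : ℕ)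
    (u v : ℕ → ℕ) : Prop :=
  1 ≤ k ∧
  (∀ x ∈ Set.Icc 1 k, ∀ y ∈ Set.Icc 1 k, x ≠ y → u x ≠ u y) ∧
  (∀ x ∈ Set.Icc 1 k, ∀ y ∈ Set.Icc 1 k, x ≠ y → v x ≠ v y) ∧
  (∀ x ∈ Set.Icc 1 k, ∀ y ∈ Set.Icc 1 k, u x ≠ v y) ∧
  (∀ x ∈ Set.Icc 1 k, ∃ i, Mrel τ i (u x) (v x)) ∧
  (∀ x ∈ Set.Icc 1 k, ∃ j, OmegaE Ω τ j (v x) (u (cyc k x))) ∧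
  (∀ x ∈ Set.Icc 1 k, ∀ y ∈ Set.Icc 1 k, x ≠ y → ∀ i,
     Mrel τ i (u x) (v x) → ¬ Mrel τ i (u y) (v y)) ∧
  (∀ x ∈ Set.Icc 1 k, ∀ y ∈ Set.Icc 1 k, x ≠ y → ∀ j,
     OmegaE Ω τ j (v x) (u (cyc k x)) → ¬ OmegaE Ω τ j (v y) (u (cyc k y)))

/-- A canonical k-nice cycle: a k-nice cycle whose processor edges are in M(τ,x) and
whose location edges are in Ω^e(τ,x⊕1), for x = 1,…,k. -/
def CanonicalNiceCycle (Ω : MTrace → ℕ → ℕ → ℕ → Prop) (τ : MTrace) (k : ℕ)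
    (u v : ℕ → ℕ) : Prop :=
  NiceCycle Ω τ k u v ∧
  (∀ x ∈ Set.Icc 1 k, Mrel τ x (u x) (v x)) ∧
  (∀ x ∈ Set.Icc 1 k, OmegaE Ω τ (cyc k x) (v x) (u (cyc k x)))

/-- The trace satisfies the automaton Constrain_k(j). -/
def ConstrainK (k j : ℕ) (τ : MTrace) : Prop :=
  (j ≤ k →
    (∀ x ∈ Lw τ j, (ev τ x).data ≤ 2) ∧
    (∀ x ∈ Lw τ j, ∀ y ∈ Lw τ j, (ev τ x).data = 1 → (ev τ y).data = 1 → x = y) ∧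
    (∀ x ∈ Lw τ j, ∀ y ∈ Lw τ j, (ev τ x).data = 0 → (ev τ y).data ≠ 0 → x < y) ∧
    (∀ y ∈ Lw τ j, (ev τ y).data = 2 → ∃ x ∈ Lw τ j, (ev τ x).data = 1 ∧ x < y)) ∧
  (k < j → ∀ x ∈ Lw τ j, (ev τ x).data = 0)

/-- The trace satisfies the automaton Check_k(i). -/
def CheckK (k i : ℕ) (τ : MTrace) : Prop :=
  ∃ x ∈ Dom τ, ∃ y ∈ Dom τ, x < y ∧
    (ev τ x).proc = i ∧ (ev τ x).loc = i ∧
    ((ev τ x).data = 1 ∨ (ev τ x).data = 2) ∧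
    (ev τ y).proc = i ∧ (ev τ y).loc = cyc k i ∧
    ((ev τ y).data = 0 ∨ ((ev τ y).op = MemOp.W ∧ (ev τ y).data = 1))

/-! A shortest closed walk in the constraint graph alternates between processor and location
edges, since two consecutive edges of the same kind compose to a single edge (by transitivity of
`M(τ,i)` and of `Ω^e(τ,j)`), and it visits no vertex twice. If two of its processor edges shared
a processor, or two of its location edges a location, the exchange property of these relations
would give a chord closing a shorter walk. So a shortest closed walk is a nice cycle, and its
length is bounded by `n` and `m` since its processors and its locations are distinct. -/

section ClosedWalk

variable {α : Type*} {R : α → α → Prop} {L a b : ℕ} {p : ℕ → α}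

def IsClosedWalk (R : α → α → Prop) (L : ℕ) (p : ℕ → α) : Prop :=
  0 < L ∧ Function.Periodic p L ∧ ∀ z, R (p z) (p (z + 1))

def IsShortestClosedWalk (R : α → α → Prop) (L : ℕ) (p : ℕ → α) : Prop :=
  IsClosedWalk R L p ∧ ∀ L' < L, ∀ q, ¬ IsClosedWalk R L' q

theorem isClosedWalk_of_chord (hp : ∀ z, a ≤ z → z < b → R (p z) (p (z + 1))) (hab : a ≤ b)
    (hR : R (p b) (p a)) :
    IsClosedWalk R (b - a + 1) (fun z => p (a + z % (b - a + 1))) := by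
  refine ⟨Nat.succ_pos _, fun z => by simp only [Nat.add_mod_right], fun z => ?_⟩
  show R (p (a + z % (b - a + 1))) (p (a + (z + 1) % (b - a + 1)))
  have hz : z % (b - a + 1) < b - a + 1 := Nat.mod_lt _ (Nat.succ_pos _)
  rcases Nat.lt_or_ge (z % (b - a + 1) + 1) (b - a + 1) with hlt | hge
  · rw [← Nat.mod_add_mod, Nat.mod_eq_of_lt hlt, ← add_assoc]
    exact hp _ (by omega) (by omega)
  · rw [← Nat.mod_add_mod, show z % (b - a + 1) + 1 = b - a + 1 by omega, Nat.mod_self,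
      show a + z % (b - a + 1) = b by omega, add_zero]
    exact hR

theorem IsClosedWalk.shift (h : IsClosedWalk R L p) (t : ℕ) :
    IsClosedWalk R L (fun z => p (z + t)) := by
  obtain ⟨hL, hper, hp⟩ := h
  refine ⟨hL, fun z => ?_, fun z => ?_⟩
  · simp only [add_right_comm z L t, hper (z + t)]
  · simpa only [add_right_comm z 1 t] using hp (z + t)

theorem IsShortestClosedWalk.shift (h : IsShortestClosedWalk R L p) (t : ℕ) :
    IsShortestClosedWalk R L (fun z => p (z + t)) :=
  ⟨h.1.shift t, h.2⟩

theorem exists_path_of_transGen {x y : α} (h : Relation.TransGen R x y) :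
    ∃ (L : ℕ) (p : ℕ → α), 0 < L ∧ p 0 = x ∧ p L = y ∧ ∀ z < L, R (p z) (p (z + 1)) := by
  induction h with
  | @single w hxw =>
    exact ⟨1, fun z => if z = 0 then x else w, one_pos, rfl, rfl, fun z hz => by
      simpa [Nat.lt_one_iff.mp hz] using hxw⟩
  | @tail y w _ hyw ih =>
    obtain ⟨L, p, hL, h0, hLy, hp⟩ := ih
    refine ⟨L + 1, Function.update p (L + 1) w, L.succ_pos, ?_, Function.update_self .., ?_⟩
    · rwa [Function.update_of_ne (by omega)]
    · intro z hz
      rcases Nat.lt_or_ge z L with hzL | hzL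
      · rw [Function.update_of_ne (by omega), Function.update_of_ne (by omega)]
        exact hp z hzL
      · rw [show z = L by omega, Function.update_of_ne (by omega), Function.update_self, hLy]
        exact hyw

theorem exists_isClosedWalk_of_transGen {x : α} (h : Relation.TransGen R x x) :
    ∃ L p, IsClosedWalk R L p := by
  obtain ⟨L, p, hL, h0, hLx, hp⟩ := exists_path_of_transGen h
  refine ⟨_, _, isClosedWalk_of_chord (a := 0) (b := L - 1) (fun z _ hz => hp z (by omega))
    (Nat.zero_le _) ?_⟩
  rw [h0, ← hLx, ← Nat.sub_add_cancel hL]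
  exact hp _ (by omega)

theorem exists_isShortestClosedWalk (h : ∃ L p, IsClosedWalk R L p) :
    ∃ L p, IsShortestClosedWalk R L p := by
  classical
  obtain ⟨p, hp⟩ := Nat.find_spec h
  exact ⟨_, p, hp, fun L' hL' q hq => Nat.find_min h hL' ⟨q, hq⟩⟩

/-- A shortest closed walk has no chords. -/
theorem IsShortestClosedWalk.eq_of_rel (h : IsShortestClosedWalk R L p) (ha : a < L) (hb : b < L)
    (hR : R (p b) (p a)) : b + 1 = a ∨ (a = 0 ∧ b + 1 = L) := by
  obtain ⟨⟨-, hper, hp⟩, hmin⟩ := h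
  by_contra hne
  rcases le_or_gt a b with hab | hba
  · exact hmin _ (by omega) _ (isClosedWalk_of_chord (fun z _ _ => hp z) hab hR)
  · exact hmin _ (by omega) _
      (isClosedWalk_of_chord (fun z _ _ => hp z) (by omega : a ≤ b + L) (hper b ▸ hR))

theorem IsShortestClosedWalk.injOn (h : IsShortestClosedWalk R L p) : Set.InjOn p (Set.Iio L) := by
  intro a ha b hb hab
  by_contra hne
  wlog hlt : a < b generalizing a b
  · exact this hb ha hab.symm (Ne.symm hne) (by omega)
  simp only [Set.mem_Iio] at ha hb
  have hR : R (p (b - 1)) (p a) := by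
    rw [hab, ← congrArg p (Nat.sub_add_cancel (by omega : 1 ≤ b))]
    exact h.1.2.2 _
  have := h.eq_of_rel ha (by omega) hR
  omega

theorem IsShortestClosedWalk.not_rel_add_two (h : IsShortestClosedWalk R L p)
    (hirr : ∀ x, ¬ R x x) (z : ℕ) : ¬ R (p z) (p (z + 2)) := by
  have hq := h.shift z
  obtain ⟨hL, hper, -⟩ := hq.1
  intro hR
  replace hR : R (p (0 + z)) (p (2 + z)) := by rwa [zero_add, add_comm]
  rcases Nat.lt_or_ge 2 L with h2 | h2
  · have := hq.eq_of_rel h2 hL hR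
    omega
  · have h20 : p (2 + z) = p (0 + z) := by
      interval_cases L
      · simpa using (hper.nat_mul 2) 0
      · simpa using hper 0
    exact hirr _ (h20 ▸ hR)

end ClosedWalk

section ConstraintGraph

variable {Ω : MTrace → ℕ → ℕ → ℕ → Prop} {τ : MTrace} {i i' j j' a b c d x y z : ℕ}

def DataLT (Ω : MTrace → ℕ → ℕ → ℕ → Prop) (τ : MTrace) (j d d' : ℕ) : Prop :=
  (d = 0 ∧ d' ≠ 0) ∨
    ∃ a b, a ∈ Lw τ j ∧ b ∈ Lw τ j ∧ Ω τ j a b ∧ (ev τ a).data = d ∧ (ev τ b).data = d'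

theorem omegaE_iff : OmegaE Ω τ j x y ↔ x ∈ Lset τ j ∧ y ∈ Lset τ j ∧
    (((ev τ x).data = (ev τ y).data ∧ (ev τ x).op = MemOp.W ∧ (ev τ y).op = MemOp.R) ∨
      DataLT Ω τ j (ev τ x).data (ev τ y).data) :=
  Iff.rfl

theorem Unambiguous.eq_of_data_eq (hU : Unambiguous τ) (ha : a ∈ Lw τ j) (hb : b ∈ Lw τ j)
    (h : (ev τ a).data = (ev τ b).data) : a = b := by
  by_contra hne
  exact (hU j b hb).2 a ha hne h

theorem DataLT.irrefl (hΩ : IsWitness Ω) (hU : Unambiguous τ) : ¬ DataLT Ω τ j d d := by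
  rintro (⟨h0, hne⟩ | ⟨a, b, ha, hb, hab, rfl, hba⟩)
  · exact hne h0
  · obtain rfl := hU.eq_of_data_eq ha hb hba.symm
    exact (hΩ τ j).2.1 a hab

theorem DataLT.trans (hΩ : IsWitness Ω) (hU : Unambiguous τ) {d₁ d₂ d₃ : ℕ}
    (h₁ : DataLT Ω τ j d₁ d₂) (h₂ : DataLT Ω τ j d₂ d₃) : DataLT Ω τ j d₁ d₃ := by
  rcases h₁ with ⟨h0, hne⟩ | ⟨a, b, ha, hb, hab, rfl, rfl⟩ <;>
    rcases h₂ with ⟨h0', hne'⟩ | ⟨a', b', ha', hb', hab', hdata, rfl⟩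
  · exact absurd h0' hne
  · exact Or.inl ⟨h0, (hU j b' hb').1⟩
  · exact absurd h0' (hU j b hb).1
  · obtain rfl := hU.eq_of_data_eq hb ha' hdata.symm
    exact Or.inr ⟨a, b', ha, hb', (hΩ τ j).2.2.1 a b b' hab hab', rfl, rfl⟩

theorem DataLT.trichotomous (hΩ : IsWitness Ω) (hU : Unambiguous τ)
    (hd : d = 0 ∨ ∃ w ∈ Lw τ j, (ev τ w).data = d)
    (hd' : d' = 0 ∨ ∃ w ∈ Lw τ j, (ev τ w).data = d') :
    DataLT Ω τ j d d' ∨ d = d' ∨ DataLT Ω τ j d' d := by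
  rcases hd with rfl | ⟨w, hw, rfl⟩ <;> rcases hd' with rfl | ⟨w', hw', rfl⟩
  · exact Or.inr (Or.inl rfl)
  · exact Or.inl (Or.inl ⟨rfl, (hU j w' hw').1⟩)
  · exact Or.inr (Or.inr (Or.inl ⟨rfl, (hU j w hw).1⟩))
  · rcases eq_or_ne w w' with rfl | hne
    · exact Or.inr (Or.inl rfl)
    rcases (hΩ τ j).2.2.2 w w' hw hw' hne with h | h
    · exact Or.inl (Or.inr ⟨w, w', hw, hw', h, rfl, rfl⟩)
    · exact Or.inr (Or.inr (Or.inr ⟨w', w, hw', hw, h, rfl, rfl⟩))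

theorem Causal.data_eq_zero_or_written (hC : Causal τ) (hx : x ∈ Lset τ j) :
    (ev τ x).data = 0 ∨ ∃ w ∈ Lw τ j, (ev τ w).data = (ev τ x).data := by
  cases hop : (ev τ x).op with
  | R => exact hC j x ⟨hx, hop⟩
  | W => exact Or.inr ⟨x, ⟨hx, hop⟩, rfl⟩

theorem OmegaE.irrefl (hΩ : IsWitness Ω) (hU : Unambiguous τ) : ¬ OmegaE Ω τ j x x := by
  rintro ⟨-, -, ⟨-, hW, hR⟩ | hlt⟩
  · exact MemOp.noConfusion (hW.symm.trans hR)
  · exact DataLT.irrefl hΩ hU hlt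

theorem OmegaE.trans (hΩ : IsWitness Ω) (hU : Unambiguous τ) (h₁ : OmegaE Ω τ j x y)
    (h₂ : OmegaE Ω τ j' y z) : OmegaE Ω τ j x z := by
  obtain ⟨hx, ⟨-, hyj⟩, h₁⟩ := omegaE_iff.1 h₁
  obtain ⟨⟨-, hyj'⟩, ⟨hz, hzj'⟩, h₂⟩ := omegaE_iff.1 h₂
  refine omegaE_iff.2 ⟨hx, ⟨hz, hzj'.trans (hyj'.symm.trans hyj)⟩, Or.inr ?_⟩
  obtain rfl : j' = j := hyj'.symm.trans hyj
  rcases h₁ with ⟨e₁, -, hR⟩ | h₁ <;> rcases h₂ with ⟨e₂, hW, -⟩ | h₂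
  · exact absurd (hW.symm.trans hR) (by decide)
  · exact e₁ ▸ h₂
  · exact e₂ ▸ h₁
  · exact h₁.trans hΩ hU h₂

/-- `Ω^e(τ,j)` ranks the events at `j` by data value under `Ω`, writes before reads of the same
value; as for any strict weak order, of two edges one can exchange the targets. -/
theorem OmegaE.exchange (hΩ : IsWitness Ω) (hU : Unambiguous τ) (hC : Causal τ)
    (h₁ : OmegaE Ω τ j a b) (h₂ : OmegaE Ω τ j c d) : OmegaE Ω τ j a d ∨ OmegaE Ω τ j c b := by
  obtain ⟨ha, hb, h₁⟩ := omegaE_iff.1 h₁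
  obtain ⟨hc, hd, h₂⟩ := omegaE_iff.1 h₂
  simp only [omegaE_iff, ha, hb, hc, hd, true_and]
  rcases DataLT.trichotomous hΩ hU (hC.data_eq_zero_or_written ha)
    (hC.data_eq_zero_or_written hd) with hlt | heq | hgt
  · exact Or.inl (Or.inr hlt)
  · rcases h₁ with ⟨e₁, hW, -⟩ | h₁ <;> rcases h₂ with ⟨e₂, -, hR⟩ | h₂
    · exact Or.inl (Or.inl ⟨heq, hW, hR⟩)
    · exact Or.inr (Or.inr (e₁ ▸ heq ▸ h₂))
    · exact Or.inr (Or.inr (e₂ ▸ heq.symm ▸ h₁))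
    · exact Or.inr (Or.inr (h₂.trans hΩ hU (heq ▸ h₁)))
  · have hca : DataLT Ω τ j (ev τ c).data (ev τ a).data := by
      rcases h₂ with ⟨e₂, -, -⟩ | h₂
      · exact e₂ ▸ hgt
      · exact h₂.trans hΩ hU hgt
    rcases h₁ with ⟨e₁, -, -⟩ | h₁
    · exact Or.inr (Or.inr (e₁ ▸ hca))
    · exact Or.inr (Or.inr (hca.trans hΩ hU h₁))

theorem Mrel.trans (h₁ : Mrel τ i x y) (h₂ : Mrel τ i' y z) : Mrel τ i x z := by
  obtain ⟨hx, ⟨-, rfl⟩, hxy⟩ := h₁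
  obtain ⟨⟨-, rfl⟩, hz, hyz⟩ := h₂
  exact ⟨hx, hz, hxy.trans hyz⟩

theorem Mrel.exchange (h₁ : Mrel τ i a b) (h₂ : Mrel τ i c d) : Mrel τ i a d ∨ Mrel τ i c b := by
  rcases lt_or_ge a d with had | hda
  · exact Or.inl ⟨h₁.1, h₂.2.1, had⟩
  · exact Or.inr ⟨h₂.1, h₁.2.1, by linarith [h₁.2.2, h₂.2.2]⟩

theorem GEdge.irrefl (hΩ : IsWitness Ω) (hU : Unambiguous τ) : ¬ GEdge Ω τ x x := by
  rintro (⟨i, -, -, hlt⟩ | ⟨j, h⟩)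
  · exact lt_irrefl x hlt
  · exact OmegaE.irrefl hΩ hU h

end ConstraintGraph

theorem alternating_of_no_two_in_a_row {P Q : ℕ → Prop} (hPQ : ∀ z, P z ∨ Q z)
    (hP : ∀ z, P z → ¬ P (z + 1)) (hQ : ∀ z, Q z → ¬ Q (z + 1)) {z₀ : ℕ} (h₀ : P z₀) (c : ℕ) :
    P (z₀ + 2 * c) ∧ Q (z₀ + 2 * c + 1) := by
  have hPQ_succ : ∀ z, P z → Q (z + 1) := fun z h => (hPQ (z + 1)).resolve_left (hP z h)
  have hQP_succ : ∀ z, Q z → P (z + 1) := fun z h => (hPQ (z + 1)).resolve_right (hQ z h)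
  induction c with
  | zero => exact ⟨h₀, hPQ_succ _ h₀⟩
  | succ c ih =>
    have hP' : P (z₀ + 2 * (c + 1)) := hQP_succ _ ih.2
    exact ⟨hP', hPQ_succ _ hP'⟩

theorem cyc_mem_Icc {k x : ℕ} (hx : x ∈ Set.Icc 1 k) : cyc k x ∈ Set.Icc 1 k := by
  unfold cyc
  split_ifs <;> simp only [Set.mem_Icc] at hx ⊢ <;> omega

theorem ev_mem {τ : MTrace} {x : ℕ} (hx : x ∈ Dom τ) : ev τ x ∈ τ := by
  obtain ⟨hx₁, hx₂⟩ := hx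
  rw [ev, List.getD_eq_getElem _ _ (by omega)]
  exact List.getElem_mem _

theorem le_of_distinct_labels {k n : ℕ} {P : ℕ → ℕ → Prop} (hex : ∀ x ∈ Set.Icc 1 k, ∃ i, P x i)
    (hrange : ∀ x ∈ Set.Icc 1 k, ∀ i, P x i → i ∈ Set.Icc 1 n)
    (hdistinct : ∀ x ∈ Set.Icc 1 k, ∀ y ∈ Set.Icc 1 k, x ≠ y → ∀ i, P x i → ¬ P y i) :
    k ≤ n := by
  choose! f hf using hex
  have hcard := Finset.card_le_card_of_injOn f (s := Finset.Icc 1 k) (t := Finset.Icc 1 n)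
    (fun x hx => by rw [Finset.coe_Icc] at hx ⊢; exact hrange x hx _ (hf x hx))
    (fun x hx y hy hxy => by
      rw [Finset.coe_Icc] at hx hy
      by_contra hne
      exact hdistinct x hx y hy hne _ (hf x hx) (hxy ▸ hf y hy))
  simpa using hcard

section NiceCycle

variable {Ω : MTrace → ℕ → ℕ → ℕ → Prop} {τ : MTrace}

theorem IsShortestClosedWalk.exists_alternating (hΩ : IsWitness Ω) (hU : Unambiguous τ)
    {L : ℕ} {p : ℕ → ℕ} (h : IsShortestClosedWalk (GEdge Ω τ) L p) :
    ∃ k q, IsShortestClosedWalk (GEdge Ω τ) (2 * k) q ∧ ∀ c,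
      (∃ i, Mrel τ i (q (2 * c)) (q (2 * c + 1))) ∧
        ∃ j, OmegaE Ω τ j (q (2 * c + 1)) (q (2 * c + 2)) := by
  set P : ℕ → Prop := fun z => ∃ i, Mrel τ i (p z) (p (z + 1)) with hP_def
  set Q : ℕ → Prop := fun z => ∃ j, OmegaE Ω τ j (p z) (p (z + 1))
  have hPQ : ∀ z, P z ∨ Q z := h.1.2.2
  have hnot := h.not_rel_add_two (fun _ => GEdge.irrefl hΩ hU)
  have hP : ∀ z, P z → ¬ P (z + 1) := fun z ⟨_, h₁⟩ ⟨_, h₂⟩ =>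
    hnot z (Or.inl ⟨_, h₁.trans h₂⟩)
  have hQ : ∀ z, Q z → ¬ Q (z + 1) := fun z ⟨_, h₁⟩ ⟨_, h₂⟩ =>
    hnot z (Or.inr ⟨_, h₁.trans hΩ hU h₂⟩)
  obtain ⟨z₀, h₀⟩ : ∃ z₀, P z₀ :=
    (hPQ 0).elim (⟨0, ·⟩) fun hQ₀ => ⟨1, (hPQ 1).resolve_right (hQ 0 hQ₀)⟩
  have hpattern := alternating_of_no_two_in_a_row hPQ hP hQ h₀
  obtain ⟨k, hk⟩ : Even L := by
    by_contra hodd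
    obtain ⟨c, rfl⟩ := Nat.not_even_iff_odd.mp hodd
    have hP_period : P (z₀ + (2 * c + 1)) := by
      simpa only [hP_def, add_right_comm z₀ _ 1, h.1.2.1 _] using h₀
    exact hP _ (hpattern c).1 (by rwa [← add_assoc] at hP_period)
  refine ⟨k, fun w => p (w + z₀), by rw [two_mul, ← hk]; exact h.shift z₀, fun c => ?_⟩
  obtain ⟨⟨i, hi⟩, j, hj⟩ := hpattern c
  exact ⟨⟨i, by convert hi using 2 <;> omega⟩, j, by convert hj using 2 <;> omega⟩

theorem IsShortestClosedWalk.niceCycle (hΩ : IsWitness Ω) (hU : Unambiguous τ) (hC : Causal τ)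
    {k : ℕ} {q : ℕ → ℕ} (h : IsShortestClosedWalk (GEdge Ω τ) (2 * k) q)
    (halt : ∀ c, (∃ i, Mrel τ i (q (2 * c)) (q (2 * c + 1))) ∧
      ∃ j, OmegaE Ω τ j (q (2 * c + 1)) (q (2 * c + 2))) :
    NiceCycle Ω τ k (fun x => q (2 * x - 2)) (fun x => q (2 * x - 1)) := by
  have hk : 1 ≤ k := by have := h.1.1; omega
  have hproc : ∀ x ∈ Set.Icc 1 k, ∃ i, Mrel τ i (q (2 * x - 2)) (q (2 * x - 1)) := by
    rintro x ⟨hx, -⟩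
    obtain ⟨⟨i, hi⟩, -⟩ := halt (x - 1)
    exact ⟨i, by convert hi using 2 <;> omega⟩
  have hloc : ∀ x ∈ Set.Icc 1 k, ∃ j, OmegaE Ω τ j (q (2 * x - 1)) (q (2 * cyc k x - 2)) := by
    rintro x ⟨hx, hxk⟩
    obtain ⟨-, j, hj⟩ := halt (x - 1)
    have hnext : q (2 * cyc k x - 2) = q (2 * (x - 1) + 2) := by
      unfold cyc
      split_ifs with hx_last
      · rw [show 2 * (x - 1) + 2 = 0 + 2 * k by omega, h.1.2.1 0]
      · congr 1; omega
    exact ⟨j, by rw [hnext]; convert hj using 2; omega⟩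
  have hinj := h.injOn
  simp only [Set.InjOn, Set.mem_Iio] at hinj
  refine ⟨hk, ?_, ?_, ?_, hproc, hloc, ?_, ?_⟩
  · rintro x ⟨hx, hxk⟩ y ⟨hy, hyk⟩ hne hxy
    have := hinj (by omega) (by omega) hxy
    omega
  · rintro x ⟨hx, hxk⟩ y ⟨hy, hyk⟩ hne hxy
    have := hinj (by omega) (by omega) hxy
    omega
  · rintro x ⟨hx, hxk⟩ y ⟨hy, hyk⟩ hxy
    have := hinj (by omega) (by omega) hxy
    omega
  · rintro x ⟨hx, hxk⟩ y ⟨hy, hyk⟩ hne i hxi hyi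
    rcases hxi.exchange hyi with hxy | hyx
    · have := h.eq_of_rel (b := 2 * x - 2) (a := 2 * y - 1) (by omega) (by omega) (Or.inl ⟨i, hxy⟩)
      omega
    · have := h.eq_of_rel (b := 2 * y - 2) (a := 2 * x - 1) (by omega) (by omega) (Or.inl ⟨i, hyx⟩)
      omega
  · rintro x hx y hy hne j hxj hyj
    have hcx := cyc_mem_Icc hx
    have hcy := cyc_mem_Icc hy
    simp only [Set.mem_Icc] at hx hy hcx hcy
    rcases hxj.exchange hΩ hU hC hyj with hxy | hyx
    · have := h.eq_of_rel (b := 2 * x - 1) (a := 2 * cyc k y - 2) (by omega) (by omega)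
        (Or.inr ⟨j, hxy⟩)
      rcases this with hidx | ⟨hidx, hwrap⟩ <;> unfold cyc at hidx <;> split_ifs at hidx <;> omega
    · have := h.eq_of_rel (b := 2 * y - 1) (a := 2 * cyc k x - 2) (by omega) (by omega)
        (Or.inr ⟨j, hyx⟩)
      rcases this with hidx | ⟨hidx, hwrap⟩ <;> unfold cyc at hidx <;> split_ifs at hidx <;> omega

theorem NiceCycle.le_min_of_inRange {n m k : ℕ} {u v : ℕ → ℕ} (hR : InRange n m τ)
    (h : NiceCycle Ω τ k u v) : k ≤ min n m := by
  obtain ⟨-, -, -, -, hproc, hloc, hproc_ne, hloc_ne⟩ := h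
  refine le_min (le_of_distinct_labels hproc (fun x _ i hi => ?_) hproc_ne)
    (le_of_distinct_labels hloc (fun x _ j hj => ?_) hloc_ne)
  · obtain ⟨⟨hdom, rfl⟩, -⟩ := hi
    obtain ⟨h₁, h₂, -⟩ := hR _ (ev_mem hdom)
    exact ⟨h₁, h₂⟩
  · obtain ⟨⟨hdom, rfl⟩, -⟩ := hj
    obtain ⟨-, -, h₁, h₂⟩ := hR _ (ev_mem hdom)
    exact ⟨h₁, h₂⟩

end NiceCycle

theorem cycle_implies_nice_cycle_general
    (n m : ℕ)
    (Ω : MTrace → ℕ → ℕ → ℕ → Prop) (hΩ : IsWitness Ω)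
    (τ : MTrace) (hR : InRange n m τ) (hU : Unambiguous τ) (hC : Causal τ)
    (hcyc : HasCycle Ω τ) :
    ∃ k u v, 1 ≤ k ∧ k ≤ min n m ∧ NiceCycle Ω τ k u v := by
  obtain ⟨x, hx⟩ := hcyc
  obtain ⟨L, p, hp⟩ := exists_isShortestClosedWalk (exists_isClosedWalk_of_transGen hx)
  obtain ⟨k, q, hq, halt⟩ := hp.exists_alternating hΩ hU
  have hnice := hq.niceCycle hΩ hU hC halt
  exact ⟨k, _, _, hnice.1, hnice.le_min_of_inRange hR, hnice⟩

/-- If the constraint graph of an unambiguous causal trace has a cycle,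
then it has a k-nice cycle for some 1 ≤ k ≤ min{n,m}. -/
theorem cycle_implies_nice_cycle
    (n m : ℕ) (hn : 1 ≤ n) (hm : 1 ≤ m)
    (Ω : MTrace → ℕ → ℕ → ℕ → Prop) (hΩ : IsWitness Ω)
    (τ : MTrace) (hR : InRange n m τ) (hU : Unambiguous τ) (hC : Causal τ)
    (hcyc : HasCycle Ω τ) :
    ∃ k u v, 1 ≤ k ∧ k ≤ min n m ∧ NiceCycle Ω τ k u v :=
  cycle_implies_nice_cycle_general n m Ω hΩ τ hR hU hC hcyc
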